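/- Let ω ∈ (1,2) and for l ∈ ℤ define a_l^{(ω)} := (-1)^l Γ(ω+1) / ( Γ(ω/2 - l + 1) · Γ(ω/2 + l + 1) ). Then for every natural number n ≥ 1 the symmetric partial sum is strictly positive: Σ_{l=-n}^{n} a_l^{(ω)} > 0. In particular every row sum of the finite Toeplitz matrix [a_{i-j}^{(ω)}]_{i,j=1}^{n} is strictly positive, i.e. the matrix is strictly diagonally dominant. -/

import Mathlib

/-!
With `x = ω / 2 ∈ (0, 1)`, the coefficients telescope, `a_l = d_l - d_{l+1}`, against
`d_m = (-1)^m Γ(ω) / (Γ(x - m + 1) Γ(x + m))`, because `1 / (x - l) + 1 / (x + l) = ω / (x² - l²)`.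
Since `Γ` has sign `(-1)^k` on `(-k, -k + 1)`, one finds `d_m > 0` for `m ≤ 0` and `d_m < 0` for
`m ≥ 1`; so any sum of consecutive coefficients over a window containing `0` is positive. The
off-diagonal coefficients are negative by the same sign count, which turns positive row sums of
the Toeplitz matrix into strict diagonal dominance.
-/

open Finset Real

lemma Finset.sum_Ico_int_sub_of_le {M : Type*} [AddCommGroup M] (f : ℤ → M) {p q : ℤ}
    (hpq : p ≤ q) : ∑ l ∈ Ico p q, (f l - f (l + 1)) = f p - f q := by
  induction q, hpq using Int.leInduction with
  | base => simp
  | succ q hpq ih =>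
    rw [Ico_add_one_right_eq_Icc, ← Ico_insert_right hpq, sum_insert right_notMem_Ico, ih]
    abel

lemma Finset.sum_erase_abs_lt_of_sum_pos {ι α : Type*} [DecidableEq ι] [AddCommGroup α]
    [LinearOrder α] [IsOrderedAddMonoid α] {s : Finset ι} {f : ι → α} {i : ι} (hi : i ∈ s)
    (hsum : 0 < ∑ j ∈ s, f j) (hoff : ∀ j ∈ s, j ≠ i → f j ≤ 0) :
    ∑ j ∈ s.erase i, |f j| < f i := by
  have habs : ∀ j ∈ s.erase i, |f j| = -f j := fun j hj ↦
    abs_of_nonpos (hoff j (mem_of_mem_erase hj) (ne_of_mem_erase hj))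
  rw [sum_congr rfl habs, sum_neg_distrib, sum_erase_eq_sub hi, neg_sub]
  exact sub_lt_self _ hsum

lemma Real.Gamma_ne_zero_of_forall_ne_intCast {y : ℝ} (hy : ∀ m : ℤ, y ≠ m) : Gamma y ≠ 0 :=
  Gamma_ne_zero fun n h ↦ hy (-n) (by simp [h])

lemma Real.neg_one_pow_div_Gamma_sub_natCast_pos {x : ℝ} (hx0 : 0 < x) (hx1 : x < 1) (k : ℕ) :
    0 < (-1) ^ k / Gamma (x - k) := by
  induction k with
  | zero => simpa using Gamma_pos_of_pos hx0
  | succ k ih =>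
    have hk : x - (k + 1) ≠ 0 := by linarith
    have hstep : (-1) ^ (k + 1) / Gamma (x - (k + 1 : ℕ)) =
        (-1) ^ k / Gamma (x - k) * (k + 1 - x) := by
      rw [show x - k = x - (k + 1) + 1 by ring, Gamma_add_one hk]
      push_cast
      field_simp
      ring
    rw [hstep]
    exact mul_pos ih (by linarith)

noncomputable def fracCenteredCoeff (ω : ℝ) (l : ℤ) : ℝ :=
  (-1 : ℝ) ^ l * Gamma (ω + 1) / (Gamma (ω / 2 - l + 1) * Gamma (ω / 2 + l + 1))

-- the tail `∑_{l ≥ m} a_l` of the coefficients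
noncomputable def fracCenteredTail (ω : ℝ) (m : ℤ) : ℝ :=
  (-1 : ℝ) ^ m * Gamma ω / (Gamma (ω / 2 - m + 1) * Gamma (ω / 2 + m))

lemma fracCenteredCoeff_neg (ω : ℝ) (l : ℤ) :
    fracCenteredCoeff ω (-l) = fracCenteredCoeff ω l := by
  simp only [fracCenteredCoeff, ← inv_zpow', inv_neg_one, Int.cast_neg, sub_neg_eq_add,
    ← sub_eq_add_neg, mul_comm (Gamma (ω / 2 + l + 1))]

lemma fracCenteredTail_one_sub (ω : ℝ) (m : ℤ) :
    fracCenteredTail ω (1 - m) = -fracCenteredTail ω m := by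
  simp only [fracCenteredTail, sub_eq_neg_add (1 : ℤ),
    zpow_add_one₀ (by norm_num : (-1 : ℝ) ≠ 0), ← inv_zpow', inv_neg_one, Int.cast_add,
    Int.cast_neg, Int.cast_one]
  rw [show ω / 2 - (-m + 1) + 1 = ω / 2 + m by ring, show ω / 2 + (-m + 1) = ω / 2 - m + 1 by ring]
  ring

section

variable {ω : ℝ} (hω : ω ∈ Set.Ioo 0 2)
include hω

lemma div_two_ne_intCast (m : ℤ) : ω / 2 ≠ m := by
  intro h
  have h0 : (0 : ℤ) < m := by exact_mod_cast (by linarith [hω.1] : (0 : ℝ) < m)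
  have h1 : m < 1 := by exact_mod_cast (by linarith [hω.2] : (m : ℝ) < 1)
  omega

lemma fracCenteredCoeff_eq_sub (l : ℤ) :
    fracCenteredCoeff ω l = fracCenteredTail ω l - fracCenteredTail ω (l + 1) := by
  have hm : ω / 2 - l ≠ 0 := fun h ↦ div_two_ne_intCast hω l (by linarith)
  have hp : ω / 2 + l ≠ 0 := fun h ↦ div_two_ne_intCast hω (-l) (by push_cast; linarith)
  have hm2 : ω - 2 * l ≠ 0 := fun h ↦ div_two_ne_intCast hω l (by linarith)
  have hp2 : ω + 2 * l ≠ 0 := fun h ↦ div_two_ne_intCast hω (-l) (by push_cast; linarith)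
  have hGm : Gamma (ω / 2 - l) ≠ 0 := Gamma_ne_zero_of_forall_ne_intCast fun m h ↦
    div_two_ne_intCast hω (m + l) (by push_cast; linarith)
  have hGp : Gamma (ω / 2 + l) ≠ 0 := Gamma_ne_zero_of_forall_ne_intCast fun m h ↦
    div_two_ne_intCast hω (m - l) (by push_cast; linarith)
  simp only [fracCenteredCoeff, fracCenteredTail, zpow_add_one₀ (by norm_num : (-1 : ℝ) ≠ 0),
    Int.cast_add, Int.cast_one]
  rw [show ω / 2 - (l + 1) + 1 = ω / 2 - l by ring, show ω / 2 + (l + 1) = ω / 2 + l + 1 by ring,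
    Gamma_add_one hm, Gamma_add_one hp, Gamma_add_one hω.1.ne']
  field_simp
  ring

lemma fracCenteredTail_pos_of_nonpos {m : ℤ} (hm : m ≤ 0) : 0 < fracCenteredTail ω m := by
  obtain ⟨k, rfl⟩ : ∃ k : ℕ, m = -k := ⟨m.natAbs, by omega⟩
  have hsign := neg_one_pow_div_Gamma_sub_natCast_pos (x := ω / 2) (by linarith [hω.1])
    (by linarith [hω.2]) k
  have hG : 0 < Gamma ω / Gamma (ω / 2 + k + 1) := by
    have := hω.1
    positivity
  have heq : fracCenteredTail ω (-k) =
      Gamma ω / Gamma (ω / 2 + k + 1) * ((-1) ^ k / Gamma (ω / 2 - k)) := by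
    simp only [fracCenteredTail, ← inv_zpow', inv_neg_one, Int.cast_neg, Int.cast_natCast,
      zpow_natCast, sub_neg_eq_add, ← sub_eq_add_neg]
    ring
  rw [heq]
  exact mul_pos hG hsign

lemma fracCenteredTail_neg_of_pos {m : ℤ} (hm : 0 < m) : fracCenteredTail ω m < 0 := by
  rw [← neg_pos, ← fracCenteredTail_one_sub]
  exact fracCenteredTail_pos_of_nonpos hω (by omega)

lemma fracCenteredCoeff_neg_of_pos {l : ℤ} (hl : 0 < l) : fracCenteredCoeff ω l < 0 := by
  obtain ⟨k, rfl⟩ : ∃ k : ℕ, l = k + 1 := ⟨(l - 1).toNat, by omega⟩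
  have hsign := neg_one_pow_div_Gamma_sub_natCast_pos (x := ω / 2) (by linarith [hω.1])
    (by linarith [hω.2]) k
  have hG : 0 < Gamma (ω + 1) / Gamma (ω / 2 + k + 2) := by
    have := hω.1
    positivity
  have heq : fracCenteredCoeff ω (k + 1) =
      -(Gamma (ω + 1) / Gamma (ω / 2 + k + 2) * ((-1) ^ k / Gamma (ω / 2 - k))) := by
    simp only [fracCenteredCoeff, zpow_add_one₀ (by norm_num : (-1 : ℝ) ≠ 0), zpow_natCast]
    push_cast
    rw [show ω / 2 - (k + 1) + 1 = ω / 2 - k by ring,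
      show ω / 2 + (k + 1) + 1 = ω / 2 + k + 2 by ring]
    ring
  rw [heq, neg_lt_zero]
  exact mul_pos hG hsign

lemma fracCenteredCoeff_neg_of_ne_zero {l : ℤ} (hl : l ≠ 0) : fracCenteredCoeff ω l < 0 := by
  rcases hl.lt_or_gt with hl | hl
  · rw [← fracCenteredCoeff_neg]
    exact fracCenteredCoeff_neg_of_pos hω (neg_pos.mpr hl)
  · exact fracCenteredCoeff_neg_of_pos hω hl

lemma sum_Icc_fracCenteredCoeff_pos (n : ℕ) :
    0 < ∑ l ∈ Icc (-n : ℤ) n, fracCenteredCoeff ω l := by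
  rw [← Ico_add_one_right_eq_Icc]
  simp only [fracCenteredCoeff_eq_sub hω]
  rw [sum_Ico_int_sub_of_le _ (by omega)]
  linarith [fracCenteredTail_pos_of_nonpos hω (m := -n) (by omega),
    fracCenteredTail_neg_of_pos hω (m := n + 1) (by omega)]

lemma sum_fracCenteredCoeff_sub_pos {n : ℕ} (i : Fin n) :
    0 < ∑ j : Fin n, fracCenteredCoeff ω (i - j) := by
  have hinc : ∀ k : ℕ, fracCenteredCoeff ω (i - k) =
      fracCenteredTail ω (i + 1 - (k + 1 : ℕ)) - fracCenteredTail ω (i + 1 - k) := by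
    intro k
    rw [fracCenteredCoeff_eq_sub hω]
    congr 2 <;> push_cast <;> ring
  rw [Fin.sum_univ_eq_sum_range (fun k ↦ fracCenteredCoeff ω (i - k)),
    sum_congr rfl fun k _ ↦ hinc k, sum_range_sub (fun k : ℕ ↦ fracCenteredTail ω (i + 1 - k))]
  linarith [fracCenteredTail_pos_of_nonpos hω (m := i + 1 - n) (by omega),
    fracCenteredTail_neg_of_pos hω (m := i + 1 - (0 : ℕ)) (by omega)]

lemma sum_erase_abs_fracCenteredCoeff_sub_lt {n : ℕ} (i : Fin n) :
    ∑ j ∈ univ.erase i, |fracCenteredCoeff ω (i - j)| < fracCenteredCoeff ω 0 := by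
  simpa only [sub_self] using sum_erase_abs_lt_of_sum_pos (mem_univ i)
    (sum_fracCenteredCoeff_sub_pos hω i)
    fun j _ hji ↦ (fracCenteredCoeff_neg_of_ne_zero hω (by omega)).le

end

/-- For `ω ∈ (1,2)` and `a_l := (-1)^l Γ(ω+1)/(Γ(ω/2-l+1)Γ(ω/2+l+1))`, every symmetric
partial sum `∑_{l=-n}^{n} a_l` with `n ≥ 1` is strictly positive. In particular every
row sum of the Toeplitz matrix `[a_{i-j}]_{i,j=1}^{n}` is strictly positive, i.e. the
matrix is strictly diagonally dominant. -/
theorem fourier_coefficients_partial_sum_pos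
    (ω : ℝ) (hω : ω ∈ Set.Ioo (1 : ℝ) 2)
    (a : ℤ → ℝ)
    (ha : ∀ l : ℤ, a l = (-1 : ℝ) ^ l * Real.Gamma (ω + 1) /
        (Real.Gamma (ω / 2 - l + 1) * Real.Gamma (ω / 2 + l + 1))) :
    (∀ n : ℕ, 1 ≤ n → 0 < ∑ l ∈ Finset.Icc (-(n : ℤ)) (n : ℤ), a l) ∧
    (∀ n : ℕ, 1 ≤ n → ∀ i : Fin n,
      0 < ∑ j : Fin n, (Matrix.of fun i j : Fin n => a ((i : ℤ) - (j : ℤ))) i j) ∧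
    (∀ n : ℕ, 1 ≤ n → ∀ i : Fin n,
      ∑ j ∈ Finset.univ.erase i, |a ((i : ℤ) - (j : ℤ))| < a 0) := by
  obtain rfl : a = fracCenteredCoeff ω := funext ha
  have hω' : ω ∈ Set.Ioo 0 2 := Set.Ioo_subset_Ioo_left zero_le_one hω
  exact ⟨fun n _ ↦ sum_Icc_fracCenteredCoeff_pos hω' n,
    fun n _ i ↦ by simpa only [Matrix.of_apply] using sum_fracCenteredCoeff_sub_pos hω' i,
    fun n _ i ↦ sum_erase_abs_fracCenteredCoeff_sub_lt hω' i⟩
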